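/- A minimum topological cut can be 'passed through' without loss: let τ be any schedule for a node-weighted DAG G, S a topological cut of G of minimum total weight, and σ the subsequence of τ consisting of the nodes of S. Then the schedule σ ∪· τ (σ followed by the remaining nodes of τ in their τ-order) is a valid schedule of G and its memory profile dominates that of τ. -/

import Mathlib

/-- Pointer-advancement definition of dominance (0-indexed). -/
def PtrDom (A B : List ℝ) : Prop :=
  ∃ a b : ℕ → ℕ,
    a 0 = 0 ∧ b 0 = 0 ∧
    a (A.length + B.length - 2) = A.length - 1 ∧
    b (A.length + B.length - 2) = B.length - 1 ∧
    (∀ k, k + 1 ≤ A.length + B.length - 2 →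
      ((a (k + 1) = a k + 1 ∧ b (k + 1) = b k) ∨
       (a (k + 1) = a k ∧ b (k + 1) = b k + 1))) ∧
    (∀ k ≤ A.length + B.length - 2,
      a k < A.length ∧ b k < B.length ∧ A.getD (a k) 0 ≤ B.getD (b k) 0)

/-- `S` is a topological cut: no edge from the complement into `S`. -/
def IsTopCut {V : Type*} (E : V → V → Prop) (S : Set V) : Prop :=
  ∀ u v, E u v → v ∈ S → u ∈ S

/-- A schedule: a duplicate-free enumeration of all nodes, all of whose
prefix sets are topological cuts. -/
def IsSchedule {V : Type*} (E : V → V → Prop) (σ : List V) : Prop :=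
  σ.Nodup ∧ (∀ v : V, v ∈ σ) ∧ ∀ i, IsTopCut E {v | v ∈ σ.take i}

/-- Node-sum memory profile: prefix sums of node weights. -/
def memProfile {V : Type*} (w : V → ℝ) (σ : List V) : List ℝ :=
  (List.range (σ.length + 1)).map fun i => ((σ.take i).map w).sum

/-!
Write `τ_j` for the set of the first `j` nodes of `τ`, and `G j`, `f j` for the weights of
`S ∩ τ_j` and `τ_j \ S`. Both `S ∩ τ_j` and `S ∪ τ_j` are topological cuts, so minimality of `S`
gives `w S ≤ G j` and `0 ≤ f j`. The profile of `σ ∪· τ` passes through the values `G j` (while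
emitting `S`) and `w S + f j` (afterwards), both bounded by the value `G j + f j` of the profile of
`τ` at step `j`. So the two pointers can follow `τ` while emitting the nodes of `S`, let the first
pointer run through the rest of `S` at a step where the profile of `τ` peaks, and then follow `τ`
again while emitting the remaining nodes; along diagonal moves both profiles grow by the weight of
the same node.
-/

section Lists

theorem List.take_add_one_eq_append_getD {α : Type*} {l : List α} {i : ℕ} (d : α)
    (hi : i < l.length) : l.take (i + 1) = l.take i ++ [l.getD i d] := by
  rw [← List.take_concat_get hi, List.getD_eq_getElem _ _ hi, List.concat_eq_append]

variable {V : Type*}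

theorem List.take_length_filter_take (q : V → Bool) (l : List V) (j : ℕ) :
    (l.filter q).take ((l.take j).filter q).length = (l.take j).filter q :=
  (List.prefix_iff_eq_take.mp ((l.take_prefix j).filter q)).symm

theorem List.exists_take_filter_eq (q : V → Bool) (l : List V) (k : ℕ) :
    ∃ j ≤ l.length, (l.filter q).take k = (l.take j).filter q := by
  induction l generalizing k with
  | nil => exact ⟨0, le_rfl, by simp⟩
  | cons v l ih =>
    by_cases hv : q v
    · cases k with
      | zero => exact ⟨0, by simp, by simp⟩
      | succ k =>
        obtain ⟨j, hj, hk⟩ := ih k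
        exact ⟨j + 1, by simpa using hj, by simp [hv, hk]⟩
    · obtain ⟨j, hj, hk⟩ := ih k
      exact ⟨j + 1, by simpa using hj, by simp [hv, hk]⟩

theorem List.filter_take_add_one (q : V → Bool) {l : List V} {j : ℕ} (hj : j < l.length) :
    (l.take (j + 1)).filter q = (l.take j).filter q ++ if q l[j] then [l[j]] else [] := by
  rw [← List.take_concat_get hj, List.concat_eq_append, List.filter_append]
  cases h : q l[j] <;> simp [h]

end Lists

namespace PtrDom

theorem length_pos {A B : List ℝ} (h : PtrDom A B) : 0 < A.length ∧ 0 < B.length := by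
  obtain ⟨a, b, -, -, -, -, -, hle⟩ := h
  obtain ⟨hA, hB, -⟩ := hle 0 (Nat.zero_le _)
  exact ⟨by omega, by omega⟩

theorem singleton {x y : ℝ} (h : x ≤ y) : PtrDom [x] [y] := by
  refine ⟨fun _ => 0, fun _ => 0, rfl, rfl, rfl, rfl, fun k hk => ?_, fun k hk => ?_⟩
  · simp at hk
  · obtain rfl : k = 0 := by simpa using hk
    simpa using h

theorem map_neg_swap {A B : List ℝ} (h : PtrDom A B) :
    PtrDom (B.map (-·)) (A.map (-·)) := by
  obtain ⟨a, b, ha0, hb0, haL, hbL, hstep, hle⟩ := h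
  have hneg : ∀ (l : List ℝ) i, (l.map (-·)).getD i 0 = -l.getD i 0 := fun l i => by
    simpa using l.getD_map 0 (n := i) (-·)
  unfold PtrDom
  simp only [List.length_map, add_comm B.length]
  refine ⟨b, a, hb0, ha0, hbL, haL, fun k hk => (hstep k hk).symm.imp And.symm And.symm,
    fun k hk => ?_⟩
  obtain ⟨hA, hB, hAB⟩ := hle k hk
  rw [hneg, hneg]
  exact ⟨hB, hA, neg_le_neg hAB⟩

theorem append_singleton_left {A B : List ℝ} {x y : ℝ} (h : PtrDom A (B ++ [y]))
    (hxy : x ≤ y) : PtrDom (A ++ [x]) (B ++ [y]) := by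
  have hA := h.length_pos.1
  obtain ⟨a, b, ha0, hb0, haL, hbL, hstep, hle⟩ := h
  unfold PtrDom
  simp only [List.length_append, List.length_singleton] at *
  set L := A.length + (B.length + 1) - 2
  have hL : A.length + 1 + (B.length + 1) - 2 = L + 1 := by omega
  rw [hL]
  refine ⟨fun k => if k ≤ L then a k else A.length, fun k => if k ≤ L then b k else B.length,
    by simpa using ha0, by simpa using hb0, by simp, by simp, fun k hk => ?_,
    fun k hk => ?_⟩
  · rcases Nat.lt_or_ge k L with hkL | hkL
    · simpa [hkL, Nat.succ_le_of_lt hkL, hkL.le] using hstep k hkL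
    · obtain rfl : k = L := by omega
      simp [haL, hbL, Nat.sub_add_cancel hA]
  · by_cases hkL : k ≤ L
    · obtain ⟨hak, hbk, hab⟩ := hle k hkL
      simp only [hkL, if_true]
      exact ⟨by omega, hbk, by rwa [List.getD_append _ _ _ _ hak]⟩
    · simp [hkL, hxy]

theorem append_singleton_right {A B : List ℝ} {x y : ℝ} (h : PtrDom (A ++ [x]) B)
    (hxy : x ≤ y) : PtrDom (A ++ [x]) (B ++ [y]) := by
  have h' : PtrDom (B.map (-·)) (A.map (-·) ++ [-x]) := by simpa using h.map_neg_swap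
  simpa [Function.comp_def] using
    (h'.append_singleton_left (x := -y) (neg_le_neg hxy)).map_neg_swap

variable {A B : List ℝ} {i j : ℕ}

theorem take_succ_left (h : PtrDom (A.take (i + 1)) (B.take (j + 1))) (hi : i + 1 < A.length)
    (hj : j < B.length) (hle : A.getD (i + 1) 0 ≤ B.getD j 0) :
    PtrDom (A.take (i + 1 + 1)) (B.take (j + 1)) := by
  rw [List.take_add_one_eq_append_getD 0 hj] at h ⊢
  rw [List.take_add_one_eq_append_getD 0 hi]
  exact h.append_singleton_left hle

theorem take_succ_right (h : PtrDom (A.take (i + 1)) (B.take (j + 1))) (hi : i < A.length)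
    (hj : j + 1 < B.length) (hle : A.getD i 0 ≤ B.getD (j + 1) 0) :
    PtrDom (A.take (i + 1)) (B.take (j + 1 + 1)) := by
  rw [List.take_add_one_eq_append_getD 0 hi] at h ⊢
  rw [List.take_add_one_eq_append_getD 0 hj]
  exact h.append_singleton_right hle

/-- Both profiles change by the same amount, so one of the two corners is dominated as well. -/
theorem take_succ_succ (h : PtrDom (A.take (i + 1)) (B.take (j + 1))) (hi : i + 1 < A.length)
    (hj : j + 1 < B.length) (hle : A.getD (i + 1) 0 ≤ B.getD (j + 1) 0)
    (hinc : A.getD (i + 1) 0 - A.getD i 0 = B.getD (j + 1) 0 - B.getD j 0) :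
    PtrDom (A.take (i + 1 + 1)) (B.take (j + 1 + 1)) := by
  rcases le_or_gt (A.getD i 0) (A.getD (i + 1) 0) with hA | hA
  · exact (h.take_succ_right (by omega) hj (hA.trans hle)).take_succ_left hi hj hle
  · exact (h.take_succ_left hi (by omega) (by linarith)).take_succ_right hi hj hle

theorem take_left_of_le {i' : ℕ} (h : PtrDom (A.take (i + 1)) (B.take (j + 1))) (hii' : i ≤ i')
    (hi' : i' < A.length) (hj : j < B.length) (hle : ∀ k < A.length, A.getD k 0 ≤ B.getD j 0) :
    PtrDom (A.take (i' + 1)) (B.take (j + 1)) := by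
  induction i', hii' using Nat.le_induction with
  | base => exact h
  | succ i' _ ih => exact (ih (by omega)).take_succ_left hi' hj (hle _ hi')

theorem take_of_path {P : ℕ → ℕ} {j₀ j₁ : ℕ}
    (h₀ : PtrDom (A.take (P j₀ + 1)) (B.take (j₀ + 1))) (hj : j₀ ≤ j₁) (hj₁ : j₁ < B.length)
    (hP : ∀ j, P j < A.length) (hle : ∀ j < B.length, A.getD (P j) 0 ≤ B.getD j 0)
    (hstep : ∀ j, j + 1 < B.length → P (j + 1) = P j ∨ (P (j + 1) = P j + 1 ∧
      A.getD (P j + 1) 0 - A.getD (P j) 0 = B.getD (j + 1) 0 - B.getD j 0)) :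
    PtrDom (A.take (P j₁ + 1)) (B.take (j₁ + 1)) := by
  induction j₁, hj using Nat.le_induction with
  | base => exact h₀
  | succ j _ ih =>
    have ih := ih (by omega)
    rcases hstep j hj₁ with hPj | ⟨hPj, hinc⟩ <;> rw [hPj]
    · exact ih.take_succ_right (hP j) hj₁ (hPj ▸ hle _ hj₁)
    · exact ih.take_succ_succ (hPj ▸ hP _) hj₁ (hPj ▸ hle _ hj₁) hinc

end PtrDom

section MemProfile

variable {V : Type*} (w : V → ℝ) (l : List V)

theorem memProfile_length : (memProfile w l).length = l.length + 1 := by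
  simp [memProfile]

theorem memProfile_getD {i : ℕ} (hi : i ≤ l.length) :
    (memProfile w l).getD i 0 = ((l.take i).map w).sum := by
  rw [List.getD_eq_getElem _ _ (by rw [memProfile_length]; omega)]
  simp [memProfile]

theorem memProfile_getD_add_one_sub {i : ℕ} (hi : i < l.length) :
    (memProfile w l).getD (i + 1) 0 - (memProfile w l).getD i 0 = w l[i] := by
  rw [memProfile_getD w l hi, memProfile_getD w l hi.le, ← List.take_concat_get hi]
  simp only [List.concat_eq_append, List.map_append, List.sum_append, List.map_singleton,
    List.sum_singleton, add_sub_cancel_left]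

theorem memProfile_take_one : (memProfile w l).take 1 = [0] := by
  simp [memProfile, List.range_succ_eq_map]

end MemProfile

/-- The staircase advances in `A` exactly at the nodes of `l` satisfying `q`. -/
theorem PtrDom.take_memProfile_of_filter_staircase {V : Type*} {w : V → ℝ} {l : List V}
    {q : V → Bool} {A : List ℝ} {k : ℕ} {a : ℝ}
    (hA : ∀ j, A.getD (k + ((l.take j).filter q).length) 0 = a + (((l.take j).filter q).map w).sum)
    (hAlen : k + (l.filter q).length < A.length)
    (hle : ∀ j ≤ l.length, a + (((l.take j).filter q).map w).sum ≤ ((l.take j).map w).sum)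
    {j₀ j₁ : ℕ} (hj : j₀ ≤ j₁) (hj₁ : j₁ ≤ l.length)
    (h₀ : PtrDom (A.take (k + ((l.take j₀).filter q).length + 1))
      ((memProfile w l).take (j₀ + 1))) :
    PtrDom (A.take (k + ((l.take j₁).filter q).length + 1)) ((memProfile w l).take (j₁ + 1)) := by
  refine h₀.take_of_path (P := fun j => k + ((l.take j).filter q).length) hj
    (by rw [memProfile_length]; omega) (fun j => ?_) (fun j hj => ?_) (fun j hj => ?_)
  · have := ((l.take_sublist j).filter q).length_le
    omega
  · rw [memProfile_length] at hj
    rw [hA, memProfile_getD w l (by omega)]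
    exact hle j (by omega)
  · rw [memProfile_length] at hj
    have hA' := hA (j + 1)
    simp only [List.filter_take_add_one q (show j < l.length by omega)] at hA' ⊢
    rw [memProfile_getD_add_one_sub w l (by omega)]
    cases hq : q l[j]
    · simp
    · right
      simp only [hq, if_true, List.length_append, List.length_singleton, List.map_append,
        List.sum_append, List.map_singleton, List.sum_singleton, ← add_assoc, true_and] at hA' ⊢
      rw [hA', hA]
      ring

section SortedProfile

variable {V : Type*} (w : V → ℝ) (l : List V) (p : V → Prop) [DecidablePred p]

theorem List.length_filter_add_length_filter_not :
    (l.filter (p ·)).length + (l.filter (¬p ·)).length = l.length := by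
  simp only [decide_not]
  exact (List.length_eq_length_filter_add _).symm

theorem List.exists_take_filter_append_filter_not (i : ℕ) :
    ∃ j ≤ l.length, (l.filter (p ·) ++ l.filter (¬p ·)).take i = (l.take j).filter (p ·) ∨
      (l.filter (p ·) ++ l.filter (¬p ·)).take i = l.filter (p ·) ++ (l.take j).filter (¬p ·) := by
  rw [List.take_append]
  by_cases hi : i ≤ (l.filter (p ·)).length
  · obtain ⟨j, hj, h⟩ := List.exists_take_filter_eq (p ·) l i
    exact ⟨j, hj, Or.inl (by simp [Nat.sub_eq_zero_of_le hi, h])⟩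
  · obtain ⟨j, hj, h⟩ := List.exists_take_filter_eq (¬p ·) l (i - (l.filter (p ·)).length)
    exact ⟨j, hj, Or.inr (by rw [List.take_of_length_le (by omega), h])⟩

theorem memProfile_filter_append_getD_length_filter_take (j : ℕ) :
    (memProfile w (l.filter (p ·) ++ l.filter (¬p ·))).getD ((l.take j).filter (p ·)).length 0 =
      (((l.take j).filter (p ·)).map w).sum := by
  have hj := ((l.take_sublist j).filter (p ·)).length_le
  rw [memProfile_getD w _ (by rw [List.length_append]; omega),
    List.take_append_of_le_length hj, List.take_length_filter_take]

theorem memProfile_filter_append_getD_length_add (j : ℕ) :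
    (memProfile w (l.filter (p ·) ++ l.filter (¬p ·))).getD
        ((l.filter (p ·)).length + ((l.take j).filter (¬p ·)).length) 0 =
      ((l.filter (p ·)).map w).sum + (((l.take j).filter (¬p ·)).map w).sum := by
  have hj := ((l.take_sublist j).filter (¬p ·)).length_le
  rw [memProfile_getD w _ (by rw [List.length_append]; omega), List.take_length_add_append,
    List.take_length_filter_take, List.map_append, List.sum_append]

variable {w l p}
variable (hin : ∀ j, ((l.filter (p ·)).map w).sum ≤ (((l.take j).filter (p ·)).map w).sum)
  (hout : ∀ j, (((l.take j).filter (p ·)).map w).sum ≤ ((l.take j).map w).sum)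
include hin

theorem sum_map_filter_add_sum_map_filter_take_not_le (j : ℕ) :
    ((l.filter (p ·)).map w).sum + (((l.take j).filter (¬p ·)).map w).sum ≤
      ((l.take j).map w).sum := by
  linarith [hin j, List.sum_map_filter_add_sum_map_filter_not p w (l.take j)]

include hout

theorem exists_getD_memProfile_filter_append_le {i : ℕ} (hi : i ≤ l.length) :
    ∃ j ≤ l.length, (memProfile w (l.filter (p ·) ++ l.filter (¬p ·))).getD i 0 ≤
      (memProfile w l).getD j 0 := by
  have hlen := List.length_filter_add_length_filter_not l p
  obtain ⟨j, hj, h | h⟩ := List.exists_take_filter_append_filter_not l p i <;>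
    refine ⟨j, hj, ?_⟩ <;>
    rw [memProfile_getD w _ (by rw [List.length_append]; omega), h, memProfile_getD w l hj]
  · exact hout j
  · rw [List.map_append, List.sum_append]
    exact sum_map_filter_add_sum_map_filter_take_not_le hin j

theorem ptrDom_memProfile_filter_append :
    PtrDom (memProfile w (l.filter (p ·) ++ l.filter (¬p ·))) (memProfile w l) := by
  have hlen := List.length_filter_add_length_filter_not l p
  have hAlen : (memProfile w (l.filter (p ·) ++ l.filter (¬p ·))).length = l.length + 1 := by
    rw [memProfile_length, List.length_append, hlen]
  have hBlen := memProfile_length w l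
  obtain ⟨jm, hjm, hmax⟩ := (Finset.range (l.length + 1)).exists_max_image
    ((memProfile w l).getD · 0) ⟨0, by simp⟩
  rw [Finset.mem_range] at hjm
  have phase₁ := PtrDom.take_memProfile_of_filter_staircase (k := 0) (a := 0) (q := (p ·))
    (fun j => by
      rw [zero_add, zero_add]
      exact memProfile_filter_append_getD_length_filter_take w l p j)
    (by omega) (fun j _ => by simpa using hout j) (Nat.zero_le jm) (by omega)
    (by simpa [memProfile_take_one] using PtrDom.singleton le_rfl)
  have hc := ((l.take_sublist jm).filter (p ·)).length_le
  have hd := ((l.take_sublist jm).filter (¬p ·)).length_le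
  have turn := phase₁.take_left_of_le
    (i' := (l.filter (p ·)).length + ((l.take jm).filter (¬p ·)).length) (by omega) (by omega)
    (by omega) fun i hi => by
      obtain ⟨j, hj, hij⟩ := exists_getD_memProfile_filter_append_le hin hout (i := i) (by omega)
      exact hij.trans (hmax j (Finset.mem_range.mpr (by omega)))
  have phase₂ := turn.take_memProfile_of_filter_staircase
    (memProfile_filter_append_getD_length_add w l p) (by omega)
    (fun j _ => sum_map_filter_add_sum_map_filter_take_not_le hin j) (by omega) le_rfl
  rwa [List.take_length, hlen, List.take_of_length_le hAlen.le,
    List.take_of_length_le hBlen.le] at phase₂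

end SortedProfile

section Cuts

variable {V : Type*} {E : V → V → Prop}

theorem IsTopCut.inter {S T : Set V} (hS : IsTopCut E S) (hT : IsTopCut E T) :
    IsTopCut E (S ∩ T) :=
  fun u v huv hv => ⟨hS u v huv hv.1, hT u v huv hv.2⟩

theorem IsTopCut.union {S T : Set V} (hS : IsTopCut E S) (hT : IsTopCut E T) :
    IsTopCut E (S ∪ T) :=
  fun u v huv hv => hv.imp (hS u v huv) (hT u v huv)

theorem IsSchedule.filter_append {l : List V} (hl : IsSchedule E l) {p : V → Prop}
    [DecidablePred p] (hp : IsTopCut E {v | p v}) :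
    IsSchedule E (l.filter (p ·) ++ l.filter (¬p ·)) := by
  obtain ⟨hnd, hall, hcut⟩ := hl
  have hperm : (l.filter (p ·) ++ l.filter (¬p ·)).Perm l := by
    simpa only [decide_not] using l.filter_append_perm (p ·)
  refine ⟨hperm.nodup_iff.mpr hnd, fun v => hperm.mem_iff.mpr (hall v), fun i => ?_⟩
  obtain ⟨j, -, h | h⟩ := List.exists_take_filter_append_filter_not l p i <;> rw [h]
  · convert hp.inter (hcut j) using 1
    ext v
    simp [and_comm]
  · convert hp.union (hcut j) using 1
    ext v
    by_cases hv : p v <;> simp [hv, hall v]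

variable [DecidableEq V] {w : V → ℝ} {S T : Finset V}

/-- Both `S ∩ T` and `S ∪ T` are cuts, and `w (S ∪ T) = w S + w T - w (S ∩ T)`. -/
theorem sum_le_sum_inter_le_sum_of_isTopCut (hS : IsTopCut E (↑S : Set V))
    (hmin : ∀ S' : Finset V, IsTopCut E (↑S' : Set V) → ∑ v ∈ S, w v ≤ ∑ v ∈ S', w v)
    (hT : IsTopCut E (↑T : Set V)) :
    ∑ v ∈ S, w v ≤ ∑ v ∈ S ∩ T, w v ∧ ∑ v ∈ S ∩ T, w v ≤ ∑ v ∈ T, w v := by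
  have hinter := hmin (S ∩ T) (by rw [Finset.coe_inter]; exact hS.inter hT)
  have hunion := hmin (S ∪ T) (by rw [Finset.coe_union]; exact hS.union hT)
  have := Finset.sum_union_inter (s₁ := S) (s₂ := T) (f := w)
  exact ⟨hinter, by linarith⟩

end Cuts

theorem List.sum_map_filter_mem {V : Type*} [DecidableEq V] (w : V → ℝ) (S : Finset V)
    {l : List V} (hl : l.Nodup) :
    ((l.filter (· ∈ S)).map w).sum = ∑ v ∈ S ∩ l.toFinset, w v := by
  rw [← List.sum_toFinset w (hl.filter _), List.toFinset_filter]
  simp only [decide_eq_true_eq, Finset.filter_mem_eq_inter, Finset.inter_comm]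

theorem minCut_pass_through_general {V : Type*} [DecidableEq V]
    (E : V → V → Prop)
    (w : V → ℝ)
    (S : Finset V) (hS : IsTopCut E (↑S : Set V))
    (hmin : ∀ S' : Finset V, IsTopCut E (↑S' : Set V) →
      ∑ v ∈ S, w v ≤ ∑ v ∈ S', w v)
    (τ : List V) (hτ : IsSchedule E τ) :
    IsSchedule E
      (τ.filter (fun v => decide (v ∈ S)) ++ τ.filter (fun v => decide (v ∉ S))) ∧
    PtrDom
      (memProfile w
        (τ.filter (fun v => decide (v ∈ S)) ++ τ.filter (fun v => decide (v ∉ S))))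
      (memProfile w τ) := by
  have hnd_take : ∀ j, (τ.take j).Nodup := fun j => (τ.take_sublist j).nodup hτ.1
  have hprefix : ∀ j, IsTopCut E (↑(τ.take j).toFinset : Set V) := fun j => by
    rw [List.coe_toFinset]
    exact hτ.2.2 j
  have hSτ : S ∩ τ.toFinset = S :=
    Finset.inter_eq_left.mpr fun v _ => List.mem_toFinset.mpr (hτ.2.1 v)
  refine ⟨hτ.filter_append hS,
    ptrDom_memProfile_filter_append (p := (· ∈ S)) (fun j => ?_) (fun j => ?_)⟩
  · rw [List.sum_map_filter_mem w S hτ.1, hSτ, List.sum_map_filter_mem w S (hnd_take j)]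
    exact (sum_le_sum_inter_le_sum_of_isTopCut hS hmin (hprefix j)).1
  · rw [List.sum_map_filter_mem w S (hnd_take j), ← List.sum_toFinset w (hnd_take j)]
    exact (sum_le_sum_inter_le_sum_of_isTopCut hS hmin (hprefix j)).2

/-- A minimum topological cut can be passed through "for free": if `τ` is a
schedule, `S` a minimum-weight topological cut and `σ = τ ∩· S`, then
`σ ∪· τ` is a valid schedule whose memory profile dominates that of `τ`. -/
theorem minCut_pass_through {V : Type*} [Fintype V] [DecidableEq V]
    (E : V → V → Prop)
    (hacyc : ∀ v, ¬ Relation.TransGen E v v)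
    (w : V → ℝ)
    (S : Finset V) (hS : IsTopCut E (↑S : Set V))
    (hmin : ∀ S' : Finset V, IsTopCut E (↑S' : Set V) →
      ∑ v ∈ S, w v ≤ ∑ v ∈ S', w v)
    (τ : List V) (hτ : IsSchedule E τ) :
    IsSchedule E
      (τ.filter (fun v => decide (v ∈ S)) ++ τ.filter (fun v => decide (v ∉ S))) ∧
    PtrDom
      (memProfile w
        (τ.filter (fun v => decide (v ∈ S)) ++ τ.filter (fun v => decide (v ∉ S))))
      (memProfile w τ) :=
  minCut_pass_through_general E w S hS hmin τ hτ
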